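/- arXiv:2210.00892 — 4 statements merged into one kernel-verified Lean document; each statement's English description precedes it below -/
import Mathlib

section
/- Let r > 0 and define b: ℝ² → ℝ³ by b(x) = (0, 2r x₁/(r²x₁²+1), (r²x₁²-1)/(r²x₁²+1)). Then b takes values in S² and satisfies ∇×b = -(b₂/x₁)·b for all x with x₁ ≠ 0, where ∇×b := (∂₁, ∂₂, 0)ᵗ × b is the planar curl. -/
/-- Scalar partial derivative in the first variable. -/
noncomputable def spd₁ (f : ℝ × ℝ → ℝ) (x : ℝ × ℝ) : ℝ := fderiv ℝ f x (1, 0)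

/-- Scalar partial derivative in the second variable. -/
noncomputable def spd₂ (f : ℝ × ℝ → ℝ) (x : ℝ × ℝ) : ℝ := fderiv ℝ f x (0, 1)

/-- The planar curl `∇ × n = (∂₁, ∂₂, 0)ᵗ × n` of a map `n : ℝ² → ℝ³`. -/
noncomputable def planarCurl (n : ℝ × ℝ → Fin 3 → ℝ) (x : ℝ × ℝ) : Fin 3 → ℝ :=
  ![ spd₂ (fun y => n y 2) x,
     -(spd₁ (fun y => n y 2) x),
     spd₁ (fun y => n y 1) x - spd₂ (fun y => n y 0) x]

/-! The profile `t ↦ (2rt, r²t² - 1) / (r²t² + 1)` is the inverse stereographic parametrisation of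
the unit circle, so `b` is `S²`-valued. Since `b` depends on `x₁` alone, its planar curl is
`(0, -∂₁b₃, ∂₁b₂)`, and both remaining components reduce to rational identities in `x₁`. -/

section PartialDerivatives

variable {x : ℝ × ℝ}

theorem spd₁_comp_fst {g : ℝ → ℝ} {g' : ℝ} (hg : HasDerivAt g g' x.1) :
    spd₁ (fun y => g y.1) x = g' := by
  have hF : HasFDerivAt (fun y : ℝ × ℝ => g y.1) ((fderiv ℝ g x.1).comp (.fst ℝ ℝ ℝ)) x :=
    hg.differentiableAt.hasFDerivAt.comp x hasFDerivAt_fst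
  simp [spd₁, hF.fderiv, hg.deriv]

theorem spd₂_comp_fst (g : ℝ → ℝ) : spd₂ (fun y => g y.1) x = 0 := by
  by_cases hd : DifferentiableAt ℝ (fun y : ℝ × ℝ => g y.1) x
  · rw [spd₂, ← hd.lineDeriv_eq_fderiv]
    simp [lineDeriv]
  · simp [spd₂, fderiv_zero_of_not_differentiableAt hd]

theorem planarCurl_of_comp_fst {b : ℝ × ℝ → Fin 3 → ℝ} {h f g : ℝ → ℝ} {f' g' : ℝ}
    (hb : ∀ y, b y = ![h y.1, f y.1, g y.1])
    (hf : HasDerivAt f f' x.1) (hg : HasDerivAt g g' x.1) :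
    planarCurl b x = ![0, -g', f'] := by
  simp only [planarCurl, hb, Matrix.cons_val_zero, Matrix.cons_val_one, Matrix.cons_val_two,
    Matrix.head_cons, Matrix.tail_cons, spd₁_comp_fst hf, spd₁_comp_fst hg, spd₂_comp_fst, sub_zero]

end PartialDerivatives

section HelicalProfile

variable (r t : ℝ)

theorem hasDerivAt_helical_snd :
    HasDerivAt (fun s => 2 * r * s / (r ^ 2 * s ^ 2 + 1))
      (2 * r * (1 - r ^ 2 * t ^ 2) / (r ^ 2 * t ^ 2 + 1) ^ 2) t := by
  have hD : r ^ 2 * t ^ 2 + 1 ≠ 0 := by positivity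
  refine (((hasDerivAt_id' t).const_mul (2 * r)).div
    (((hasDerivAt_pow 2 t).const_mul (r ^ 2)).add_const 1) hD).congr_deriv ?_
  field_simp
  ring

theorem hasDerivAt_helical_thd :
    HasDerivAt (fun s => (r ^ 2 * s ^ 2 - 1) / (r ^ 2 * s ^ 2 + 1))
      (4 * r ^ 2 * t / (r ^ 2 * t ^ 2 + 1) ^ 2) t := by
  have hD : r ^ 2 * t ^ 2 + 1 ≠ 0 := by positivity
  refine ((((hasDerivAt_pow 2 t).const_mul (r ^ 2)).sub_const 1).div
    (((hasDerivAt_pow 2 t).const_mul (r ^ 2)).add_const 1) hD).congr_deriv ?_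
  field_simp
  ring

theorem helical_sq_add_sq :
    (2 * r * t / (r ^ 2 * t ^ 2 + 1)) ^ 2 + ((r ^ 2 * t ^ 2 - 1) / (r ^ 2 * t ^ 2 + 1)) ^ 2 = 1 := by
  have hD : r ^ 2 * t ^ 2 + 1 ≠ 0 := by positivity
  field_simp
  ring

end HelicalProfile

theorem helical_map_beltrami_general (r : ℝ)
    (b : ℝ × ℝ → Fin 3 → ℝ)
    (hb : ∀ x : ℝ × ℝ, b x =
      ![ 0,
         2 * r * x.1 / (r ^ 2 * x.1 ^ 2 + 1),
         (r ^ 2 * x.1 ^ 2 - 1) / (r ^ 2 * x.1 ^ 2 + 1)]) :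
    (∀ x : ℝ × ℝ, ∑ i : Fin 3, (b x i) ^ 2 = 1) ∧
    (∀ x : ℝ × ℝ, x.1 ≠ 0 →
      planarCurl b x = -(b x 1 / x.1) • b x) := by
  refine ⟨fun x => by simp [Fin.sum_univ_three, hb, helical_sq_add_sq], fun x hx => ?_⟩
  have hD : r ^ 2 * x.1 ^ 2 + 1 ≠ 0 := by positivity
  rw [planarCurl_of_comp_fst (h := fun _ => 0) hb (hasDerivAt_helical_snd r x.1)
    (hasDerivAt_helical_thd r x.1), hb]
  ext i
  fin_cases i <;>
    simp only [Fin.isValue, Fin.zero_eta, Fin.mk_one, Fin.reduceFinMk, Matrix.cons_val,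
      Matrix.cons_val_zero, Matrix.cons_val_one, Pi.smul_apply, smul_eq_mul, mul_zero, neg_mul] <;>
    field_simp <;> ring

theorem helical_map_beltrami (r : ℝ) (hr : 0 < r)
    (b : ℝ × ℝ → Fin 3 → ℝ)
    (hb : ∀ x : ℝ × ℝ, b x =
      ![ 0,
         2 * r * x.1 / (r ^ 2 * x.1 ^ 2 + 1),
         (r ^ 2 * x.1 ^ 2 - 1) / (r ^ 2 * x.1 ^ 2 + 1)]) :
    (∀ x : ℝ × ℝ, ∑ i : Fin 3, (b x i) ^ 2 = 1) ∧
    (∀ x : ℝ × ℝ, x.1 ≠ 0 →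
      planarCurl b x = -(b x 1 / x.1) • b x) :=
  helical_map_beltrami_general r b hb
end

section
/- For every smooth compactly supported ξ: (0,∞) → ℝ, the Hardy-type inequality ∫₀^∞ ξ(ρ)²/ρ⁵ dρ ≤ (1/4) ∫₀^∞ ξ'(ρ)²/ρ³ dρ holds. -/
open Real MeasureTheory Set

theorem hardy_type_inequality (ξ : ℝ → ℝ)
    (hξ : ContDiff ℝ (⊤ : ℕ∞) ξ) (hcs : HasCompactSupport ξ)
    (hsupp : tsupport ξ ⊆ Set.Ioi 0) :
    ∫ ρ in Set.Ioi (0:ℝ), (ξ ρ) ^ 2 / ρ ^ 5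
      ≤ (1 / 4) * ∫ ρ in Set.Ioi (0:ℝ), (deriv ξ ρ) ^ 2 / ρ ^ 3 := by
  have h0K : (0:ℝ) ∉ tsupport ξ := fun h => lt_irrefl 0 (Set.mem_Ioi.mp (hsupp h))
  obtain ⟨δ, hδ, hball⟩ : ∃ δ > 0, Metric.ball (0:ℝ) δ ⊆ (tsupport ξ)ᶜ :=
    Metric.isOpen_iff.1 ((isClosed_tsupport ξ).isOpen_compl) 0 h0K
  obtain ⟨b, hb⟩ : BddAbove (tsupport ξ) := hcs.bddAbove
  set c : ℝ := δ / 2 with hc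
  set b' : ℝ := max b δ + 1 with hb'
  have hcpos : 0 < c := by positivity
  have hcb : c ≤ b' := by
    have := le_max_right b δ
    simp only [hc, hb']; linarith
  -- vanishing outside (c, b']
  have hvan : ∀ x : ℝ, x ≤ c ∨ b' ≤ x → ξ x = 0 ∧ deriv ξ x = 0 := by
    intro x hx
    have hxK : x ∉ tsupport ξ := by
      intro hxK
      have hx0 : 0 < x := hsupp hxK
      rcases hx with h | h
      · exact hball (by simp [Real.dist_eq, abs_of_pos hx0]; simp [hc] at h; linarith) hxK
      · have h1 := hb hxK
        have h2 := le_max_left b δ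
        simp only [hb'] at h; linarith
    exact ⟨image_eq_zero_of_notMem_tsupport hxK,
      by by_contra h; exact hxK (support_deriv_subset (by simpa using h))⟩
  have hpos : ∀ x ∈ Set.uIcc c b', x ≠ 0 := by
    intro x hx
    rw [Set.uIcc_of_le hcb] at hx
    exact ne_of_gt (lt_of_lt_of_le hcpos hx.1)
  have hcont : Continuous (deriv ξ) := hξ.continuous_deriv (by simp)
  have hcξ : Continuous ξ := hξ.continuous
  -- continuity of integrands on the interval
  have hc1 : ContinuousOn (fun ρ => ξ ρ ^ 2 / ρ ^ 5) (Set.uIcc c b') :=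
    ContinuousOn.div (by fun_prop) (by fun_prop) (fun x hx => pow_ne_zero _ (hpos x hx))
  have hc2 : ContinuousOn (fun ρ => deriv ξ ρ ^ 2 / ρ ^ 3) (Set.uIcc c b') :=
    ContinuousOn.div (by fun_prop) (by fun_prop) (fun x hx => pow_ne_zero _ (hpos x hx))
  have hcg : ContinuousOn (fun ρ => 2 * ξ ρ * deriv ξ ρ / ρ ^ 4 - 4 * ξ ρ ^ 2 / ρ ^ 5)
      (Set.uIcc c b') := by
    apply ContinuousOn.sub
    · exact ContinuousOn.div (by fun_prop) (by fun_prop) (fun x hx => pow_ne_zero _ (hpos x hx))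
    · exact ContinuousOn.div (by fun_prop) (by fun_prop) (fun x hx => pow_ne_zero _ (hpos x hx))
  have hi1 : IntervalIntegrable (fun ρ => ξ ρ ^ 2 / ρ ^ 5) volume c b' :=
    hc1.intervalIntegrable
  have hi2 : IntervalIntegrable (fun ρ => deriv ξ ρ ^ 2 / ρ ^ 3) volume c b' :=
    hc2.intervalIntegrable
  have hig : IntervalIntegrable (fun ρ => 2 * ξ ρ * deriv ξ ρ / ρ ^ 4 - 4 * ξ ρ ^ 2 / ρ ^ 5)
      volume c b' := hcg.intervalIntegrable
  -- FTC : integral of g is zero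
  have hFTC : ∫ ρ in c..b', (2 * ξ ρ * deriv ξ ρ / ρ ^ 4 - 4 * ξ ρ ^ 2 / ρ ^ 5) = 0 := by
    have hder : ∀ ρ ∈ Set.uIcc c b',
        HasDerivAt (fun x => ξ x ^ 2 / x ^ 4)
          (2 * ξ ρ * deriv ξ ρ / ρ ^ 4 - 4 * ξ ρ ^ 2 / ρ ^ 5) ρ := by
      intro ρ hρ
      have hρ0 : ρ ≠ 0 := hpos ρ hρ
      have h1 : HasDerivAt ξ (deriv ξ ρ) ρ :=
        (hξ.differentiable (by simp) ρ).hasDerivAt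
      have h2 : HasDerivAt (fun x => ξ x ^ 2) (2 * ξ ρ * deriv ξ ρ) ρ := by
        simpa [mul_comm, mul_assoc] using h1.fun_pow 2
      have h3 : HasDerivAt (fun x : ℝ => x ^ 4) (4 * ρ ^ 3) ρ := by
        simpa using hasDerivAt_pow 4 ρ
      have h4 := h2.fun_div h3 (pow_ne_zero 4 hρ0)
      exact h4.congr_deriv (by
        rw [div_sub_div _ _ (pow_ne_zero 4 hρ0) (pow_ne_zero 5 hρ0), div_eq_div_iff (by positivity) (by positivity)]
        ring)
    rw [intervalIntegral.integral_eq_sub_of_hasDerivAt hder hig]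
    rw [(hvan b' (Or.inr le_rfl)).1, (hvan c (Or.inl le_rfl)).1]
    ring
  -- rewrite the set integrals as interval integrals
  have hA : ∫ ρ in Set.Ioi (0:ℝ), ξ ρ ^ 2 / ρ ^ 5 = ∫ ρ in c..b', ξ ρ ^ 2 / ρ ^ 5 := by
    rw [intervalIntegral.integral_of_le hcb,
      setIntegral_eq_integral_of_forall_compl_eq_zero (s := Set.Ioi (0:ℝ)),
      setIntegral_eq_integral_of_forall_compl_eq_zero (s := Set.Ioc c b')]
    · intro x hx
      simp only [Set.mem_Ioc, not_and_or, not_lt, not_le] at hx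
      rcases hx with h | h
      · rw [(hvan x (Or.inl h)).1]; simp
      · rw [(hvan x (Or.inr h.le)).1]; simp
    · intro x hx
      simp only [Set.mem_Ioi, not_lt] at hx
      rw [(hvan x (Or.inl (by linarith))).1]; simp
  have hB : ∫ ρ in Set.Ioi (0:ℝ), deriv ξ ρ ^ 2 / ρ ^ 3
      = ∫ ρ in c..b', deriv ξ ρ ^ 2 / ρ ^ 3 := by
    rw [intervalIntegral.integral_of_le hcb,
      setIntegral_eq_integral_of_forall_compl_eq_zero (s := Set.Ioi (0:ℝ)),
      setIntegral_eq_integral_of_forall_compl_eq_zero (s := Set.Ioc c b')]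
    · intro x hx
      simp only [Set.mem_Ioc, not_and_or, not_lt, not_le] at hx
      rcases hx with h | h
      · rw [(hvan x (Or.inl h)).2]; simp
      · rw [(hvan x (Or.inr h.le)).2]; simp
    · intro x hx
      simp only [Set.mem_Ioi, not_lt] at hx
      rw [(hvan x (Or.inl (by linarith))).2]; simp
  -- key pointwise inequality and integral comparison
  have hmono : ∫ ρ in c..b', ξ ρ ^ 2 / ρ ^ 5
      ≤ ∫ ρ in c..b', ((-(1/2)) * (2 * ξ ρ * deriv ξ ρ / ρ ^ 4 - 4 * ξ ρ ^ 2 / ρ ^ 5)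
          + (1/4) * (deriv ξ ρ ^ 2 / ρ ^ 3)) := by
    apply intervalIntegral.integral_mono_on hcb hi1
      ((hig.const_mul _).add (hi2.const_mul _))
    intro x hx
    have hx0 : 0 < x := lt_of_lt_of_le hcpos hx.1
    have hkey : (-(1/2)) * (2 * ξ x * deriv ξ x / x ^ 4 - 4 * ξ x ^ 2 / x ^ 5)
        + (1/4) * (deriv ξ x ^ 2 / x ^ 3)
        - ξ x ^ 2 / x ^ 5 = (2 * ξ x - x * deriv ξ x) ^ 2 / (4 * x ^ 5) := by
      field_simp
      ring
    have hnn : (0:ℝ) ≤ (2 * ξ x - x * deriv ξ x) ^ 2 / (4 * x ^ 5) := by positivity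
    linarith [hkey ▸ hnn]
  rw [intervalIntegral.integral_add (hig.const_mul _) (hi2.const_mul _),
    intervalIntegral.integral_const_mul, intervalIntegral.integral_const_mul,
    hFTC] at hmono
  rw [hA, hB]
  linarith
end

section
/- Let θ(ρ) = π - 2·arctan(ρ) and L₁ := -(d/dρ)(ρ d/dρ) + (1+cos θ(ρ))²/ρ - ρ·θ'(ρ)². Then L₁(sin θ(ρ)/ρ) = 0 for all ρ > 0, i.e., the function ρ ↦ sin θ(ρ)/ρ = 2/(ρ²+1) lies in the kernel of L₁. -/
/-!
On `ρ > 0` the function `sin θ(ρ) / ρ` is `2 / (ρ² + 1)`, so `ρ · (sin θ / ρ)' = -4ρ² / (ρ² + 1)²`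
and `(ρ (sin θ / ρ)')' = 8ρ(ρ² - 1) / (ρ² + 1)³`. With `1 + cos θ = 2ρ² / (ρ² + 1)` and
`θ' = -2 / (ρ² + 1)`, the potential term `[(1 + cos θ)²/ρ - ρ θ'²] · 2/(ρ² + 1)` equals the same
rational function, and the two cancel.
-/

open Real

theorem Real.sin_pi_sub_two_mul_arctan (x : ℝ) :
    sin (π - 2 * arctan x) = 2 * x / (x ^ 2 + 1) := by
  have hsqrt : √(1 + x ^ 2) ^ 2 = 1 + x ^ 2 := sq_sqrt (by positivity)
  have hsqrt_ne : √(1 + x ^ 2) ≠ 0 := by positivity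
  rw [sin_pi_sub, sin_two_mul, sin_arctan, cos_arctan]
  field_simp
  rw [hsqrt]
  ring

theorem Real.cos_pi_sub_two_mul_arctan (x : ℝ) :
    cos (π - 2 * arctan x) = (x ^ 2 - 1) / (x ^ 2 + 1) := by
  rw [cos_pi_sub, cos_two_mul, cos_sq_arctan]
  field_simp
  ring

theorem Real.hasDerivAt_pi_sub_two_mul_arctan (x : ℝ) :
    HasDerivAt (fun t => π - 2 * arctan t) (-2 / (x ^ 2 + 1)) x := by
  refine (((hasDerivAt_arctan x).const_mul 2).const_sub π).congr_deriv ?_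
  field_simp
  ring

theorem hasDerivAt_two_div_sq_add_one (x : ℝ) :
    HasDerivAt (fun t : ℝ => 2 / (t ^ 2 + 1)) (-4 * x / (x ^ 2 + 1) ^ 2) x := by
  refine ((hasDerivAt_const x 2).div ((hasDerivAt_pow 2 x).add_const 1)
    (by positivity)).congr_deriv ?_
  field_simp
  ring

theorem hasDerivAt_sq_div_sq_add_one_sq (x : ℝ) :
    HasDerivAt (fun t : ℝ => t ^ 2 / (t ^ 2 + 1) ^ 2)
      (-2 * x * (x ^ 2 - 1) / (x ^ 2 + 1) ^ 3) x := by
  refine ((hasDerivAt_pow 2 x).div (((hasDerivAt_pow 2 x).add_const 1).fun_pow 2)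
    (by positivity)).congr_deriv ?_
  field_simp
  ring

theorem sin_pi_sub_two_mul_arctan_div_eventuallyEq {x : ℝ} (hx : x ≠ 0) :
    (fun t => sin (π - 2 * arctan t) / t) =ᶠ[nhds x] fun t => 2 / (t ^ 2 + 1) := by
  filter_upwards [isOpen_ne.mem_nhds hx] with t ht
  rw [sin_pi_sub_two_mul_arctan]
  field_simp

theorem deriv_sin_pi_sub_two_mul_arctan_div {x : ℝ} (hx : x ≠ 0) :
    deriv (fun t => sin (π - 2 * arctan t) / t) x = -4 * x / (x ^ 2 + 1) ^ 2 := by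
  rw [(sin_pi_sub_two_mul_arctan_div_eventuallyEq hx).deriv_eq]
  exact (hasDerivAt_two_div_sq_add_one x).deriv

theorem deriv_mul_deriv_sin_pi_sub_two_mul_arctan_div {x : ℝ} (hx : x ≠ 0) :
    deriv (fun s => s * deriv (fun t => sin (π - 2 * arctan t) / t) s) x
      = 8 * x * (x ^ 2 - 1) / (x ^ 2 + 1) ^ 3 := by
  have heq : (fun s => s * deriv (fun t => sin (π - 2 * arctan t) / t) s)
      =ᶠ[nhds x] fun s => -4 * (s ^ 2 / (s ^ 2 + 1) ^ 2) := by
    filter_upwards [isOpen_ne.mem_nhds hx] with s hs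
    rw [deriv_sin_pi_sub_two_mul_arctan_div hs]
    ring
  rw [heq.deriv_eq, ((hasDerivAt_sq_div_sq_add_one_sq x).const_mul (-4)).deriv]
  ring

theorem kernel_of_L1 (θ : ℝ → ℝ)
    (hθ : ∀ ρ : ℝ, θ ρ = π - 2 * Real.arctan ρ) :
    ∀ ρ > (0:ℝ),
      -(deriv (fun s => s * deriv (fun t => Real.sin (θ t) / t) s) ρ)
        + ((1 + Real.cos (θ ρ)) ^ 2 / ρ - ρ * (deriv θ ρ) ^ 2)
            * (Real.sin (θ ρ) / ρ) = 0 := by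
  obtain rfl : θ = fun ρ => π - 2 * arctan ρ := funext hθ
  intro ρ hρ
  rw [deriv_mul_deriv_sin_pi_sub_two_mul_arctan_div hρ.ne',
    (hasDerivAt_pi_sub_two_mul_arctan ρ).deriv, cos_pi_sub_two_mul_arctan,
    sin_pi_sub_two_mul_arctan]
  field_simp
  ring
end

section
/- Let k ≥ 2 be an integer, r > 0, and define f_k^r(ρ) := 2(k²-1)·sin²θ/ρ³ + 4(k-1)·sin²θ·cosθ/ρ³ + 8(1-k)·r²·sin³θ/ρ², with θ = θ(ρ) the skyrmion profile. Then ρ⁵·f_k^r(ρ) → -8(k-1)(8r² - k - 3) as ρ → ∞. -/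
open Real Filter Topology

/- With `a = arctan ρ`, `sin θ = sin (2a) = 2 sin a cos a` and `ρ cos a = sin a`, so `ρ sin θ = 2 sin² a`
and `cos θ = cos (π - 2a)`. As `ρ → ∞`, `a → π/2`, hence `ρ sin θ → 2` and `cos θ → 1` by continuity.
Multiplying out, `ρ⁵ f_k^r(ρ) = 2(k²-1)(ρ sin θ)² + 4(k-1)(ρ sin θ)² cos θ + 8(1-k) r² (ρ sin θ)³`,
which tends to `8(k²-1) + 16(k-1) - 64(k-1) r² = -8(k-1)(8r² - k - 3)`. -/

lemma mul_sin_pi_sub_two_mul_arctan (x : ℝ) :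
    x * sin (π - 2 * arctan x) = 2 * sin (arctan x) ^ 2 := by
  have hx : x * cos (arctan x) = sin (arctan x) := by
    nth_rw 1 [← tan_arctan x]
    rw [tan_eq_sin_div_cos, div_mul_cancel₀ _ (cos_arctan_pos x).ne']
  rw [sin_pi_sub, sin_two_mul]
  linear_combination 2 * sin (arctan x) * hx

lemma tendsto_arctan_atTop_nhds : Tendsto arctan atTop (𝓝 (π / 2)) :=
  tendsto_arctan_atTop.mono_right nhdsWithin_le_nhds

lemma tendsto_mul_sin_pi_sub_two_mul_arctan :
    Tendsto (fun x => x * sin (π - 2 * arctan x)) atTop (𝓝 2) := by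
  have h : Continuous fun a => 2 * sin a ^ 2 := by fun_prop
  simp only [mul_sin_pi_sub_two_mul_arctan]
  simpa [Function.comp_def] using
    (h.tendsto (π / 2)).comp tendsto_arctan_atTop_nhds

lemma tendsto_cos_pi_sub_two_mul_arctan :
    Tendsto (fun x => cos (π - 2 * arctan x)) atTop (𝓝 1) := by
  have h : Continuous fun a => cos (π - 2 * a) := by fun_prop
  simpa [Function.comp_def, mul_div_cancel₀] using
    (h.tendsto (π / 2)).comp tendsto_arctan_atTop_nhds

theorem effective_potential_tail_general (k : ℕ) (r : ℝ)
    (θ : ℝ → ℝ) (hθ : ∀ ρ : ℝ, θ ρ = π - 2 * Real.arctan ρ) :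
    Tendsto
      (fun ρ : ℝ => ρ ^ 5 *
        (2 * ((k:ℝ) ^ 2 - 1) * Real.sin (θ ρ) ^ 2 / ρ ^ 3
          + 4 * ((k:ℝ) - 1) * Real.sin (θ ρ) ^ 2 * Real.cos (θ ρ) / ρ ^ 3
          + 8 * (1 - (k:ℝ)) * r ^ 2 * Real.sin (θ ρ) ^ 3 / ρ ^ 2))
      atTop
      (nhds (-8 * ((k:ℝ) - 1) * (8 * r ^ 2 - (k:ℝ) - 3))) := by
  set s := fun ρ : ℝ => ρ * sin (θ ρ)
  set c := fun ρ : ℝ => cos (θ ρ)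
  have hs : Tendsto s atTop (𝓝 2) := by
    simpa only [s, hθ] using tendsto_mul_sin_pi_sub_two_mul_arctan
  have hc : Tendsto c atTop (𝓝 1) := by
    simpa only [c, hθ] using tendsto_cos_pi_sub_two_mul_arctan
  have hlim : Tendsto (fun ρ => 2 * ((k:ℝ) ^ 2 - 1) * s ρ ^ 2 + 4 * ((k:ℝ) - 1) * s ρ ^ 2 * c ρ
      + 8 * (1 - (k:ℝ)) * r ^ 2 * s ρ ^ 3) atTop
      (𝓝 (2 * ((k:ℝ) ^ 2 - 1) * 2 ^ 2 + 4 * ((k:ℝ) - 1) * 2 ^ 2 * 1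
        + 8 * (1 - (k:ℝ)) * r ^ 2 * 2 ^ 3)) :=
    ((tendsto_const_nhds.mul (hs.pow 2)).add
      ((tendsto_const_nhds.mul (hs.pow 2)).mul hc)).add (tendsto_const_nhds.mul (hs.pow 3))
  convert hlim.congr' _ using 2
  · ring
  filter_upwards [eventually_ne_atTop 0] with ρ hρ
  simp only [s, c]
  field_simp

theorem effective_potential_tail (k : ℕ) (hk : 2 ≤ k) (r : ℝ) (hr : 0 < r)
    (θ : ℝ → ℝ) (hθ : ∀ ρ : ℝ, θ ρ = π - 2 * Real.arctan ρ) :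
    Tendsto
      (fun ρ : ℝ => ρ ^ 5 *
        (2 * ((k:ℝ) ^ 2 - 1) * Real.sin (θ ρ) ^ 2 / ρ ^ 3
          + 4 * ((k:ℝ) - 1) * Real.sin (θ ρ) ^ 2 * Real.cos (θ ρ) / ρ ^ 3
          + 8 * (1 - (k:ℝ)) * r ^ 2 * Real.sin (θ ρ) ^ 3 / ρ ^ 2))
      atTop
      (nhds (-8 * ((k:ℝ) - 1) * (8 * r ^ 2 - (k:ℝ) - 3))) :=
  effective_potential_tail_general k r θ hθ
end
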